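/- Let A₁ = (n₁, Σ, M₁, α₁, η₁) be a PA. A PA A₂ = (n₂, Σ, M₂, α₂, η₂) is equivalent to A₁ if and only if there exist matrices M̃(a) ∈ ℝ^{(n₁+n₂)×(n₁+n₂)} for each a ∈ Σ and a matrix F ∈ ℝ^{(n₁+n₂)×(n₁+n₂)} such that: the first row of F equals the concatenated vector (α₁, α₂); F · (η₁ᵀ, −η₂ᵀ)ᵀ = (0,…,0)ᵀ; and F · diag(M₁(a), M₂(a)) = M̃(a) · F for all a ∈ Σ, where diag(M₁(a), M₂(a)) denotes the block-diagonal matrix with blocks M₁(a) and M₂(a). -/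

import Mathlib

open Matrix

noncomputable section

/-- The matrix `M(w)` of a word: `M(ε) = I`, `M(a₁⋯a_k) = M(a₁)⋯M(a_k)`. -/
def wordProd {S : Type*} {Γ : Type*} [Fintype S] [DecidableEq S]
    (M : Γ → Matrix S S ℝ) (w : List Γ) : Matrix S S ℝ :=
  (w.map M).prod

/-- The language of the weighted automaton `(M, α, η)`: `L(w) = α M(w) η`. -/
def WAlang {S : Type*} {Γ : Type*} [Fintype S] [DecidableEq S]
    (M : Γ → Matrix S S ℝ) (α η : S → ℝ) (w : List Γ) : ℝ :=
  α ⬝ᵥ (wordProd M w).mulVec η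

/-!
Put the two automata side by side: the automaton with block-diagonal transitions
`diag(M₁(a), M₂(a))`, initial vector `(α₁, α₂)` and final vector `(η₁, -η₂)` has language
`L₁ - L₂`, so `A₁` and `A₂` are equivalent iff this difference automaton has the zero language.

An automaton `(D, x₀, η)` has the zero language iff its reachable space
`V = span {x₀ D(w)}` lies in `η^⊥`. Choose `F` whose rows span `V`, with first row `x₀`
(extend `x₀` to a basis of `V`; there are at most as many basis vectors as rows). Then
`V ⊆ η^⊥` says `F η = 0`, and invariance of `V` under each `D(a)` says that every row of
`F D(a)` is a combination of rows of `F`, i.e. `F D(a) = M̃(a) F`. Conversely, from such `F` one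
gets `F D(w) = M̃(w) F` for all words, so `x₀ D(w) η` is the first entry of `M̃(w) F η = 0`.
-/

theorem Matrix.exists_row_eq_and_span_range_eq {K ι : Type*} [Field K] [Fintype ι]
    {s : Set (ι → K)} {x₀ : ι → K} (hx₀ : x₀ ∈ s) (hne : x₀ ≠ 0) (i₀ : ι) :
    ∃ F : Matrix ι ι K, F i₀ = x₀ ∧ Submodule.span K (Set.range F) = Submodule.span K s := by
  classical
  obtain ⟨b, hbs, hx₀b, hsb, hb⟩ :=
    exists_linearIndepOn_id_extension (LinearIndepOn.singleton (R := K) (v := id) hne)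
      (Set.singleton_subset_iff.2 hx₀)
  have hb' : LinearIndependent K ((↑) : b → ι → K) := hb
  have : Fintype b := hb'.setFinite.fintype
  have hcard : Fintype.card b ≤ Fintype.card ι := by
    simpa using hb'.fintype_card_le_finrank
  obtain ⟨f⟩ := Function.Embedding.nonempty_of_card_le hcard
  set y₀ : b := ⟨x₀, hx₀b rfl⟩
  set e : b ↪ ι := f.trans (Equiv.swap (f y₀) i₀).toEmbedding
  have he : e y₀ = i₀ := by simp [e]
  obtain ⟨F, hF, hF0⟩ : ∃ F : Matrix ι ι K, (∀ y, F (e y) = y) ∧ ∀ i, (¬∃ y, e y = i) → F i = 0 :=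
    ⟨Function.extend e Subtype.val 0, e.injective.extend_apply _ _,
      fun i hi => Function.extend_apply' _ _ _ hi⟩
  refine ⟨F, he ▸ hF y₀, le_antisymm ?_ ?_⟩
  · rw [Submodule.span_le]
    rintro _ ⟨i, rfl⟩
    by_cases hi : ∃ y, e y = i
    · obtain ⟨y, rfl⟩ := hi
      exact hF y ▸ Submodule.subset_span (hbs y.2)
    · exact hF0 i hi ▸ Submodule.zero_mem _
  · calc Submodule.span K s ≤ Submodule.span K b := Submodule.span_le.2 hsb
      _ ≤ Submodule.span K (Set.range F) :=
        Submodule.span_mono fun x hx => ⟨e ⟨x, hx⟩, hF ⟨x, hx⟩⟩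

theorem Matrix.exists_mul_eq_mul_of_vecMul_mem_span {R m n : Type*} [Semiring R] [Fintype m]
    [Fintype n] {F : Matrix m n R} {D : Matrix n n R}
    (h : ∀ i, F i ᵥ* D ∈ Submodule.span R (Set.range F)) : ∃ C : Matrix m m R, F * D = C * F := by
  choose C hC using fun i => (Submodule.mem_span_range_iff_exists_fun R).1 (h i)
  refine ⟨Matrix.of C, funext fun i => ?_⟩
  rw [mul_apply_eq_vecMul, mul_apply_eq_vecMul, ← hC, vecMul_eq_sum]
  rfl

lemma Fin.append_comp_finSumFinEquiv {α : Type*} {m n : ℕ} (u : Fin m → α) (v : Fin n → α) :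
    Fin.append u v ∘ finSumFinEquiv = Sum.elim u v :=
  Fin.append_comp_sumElim

section WordProd

variable {S T Γ : Type*} [Fintype S] [DecidableEq S] [Fintype T] [DecidableEq T]

@[simp]
lemma wordProd_nil (M : Γ → Matrix S S ℝ) : wordProd M [] = 1 := rfl

@[simp]
lemma wordProd_cons (M : Γ → Matrix S S ℝ) (a : Γ) (w : List Γ) :
    wordProd M (a :: w) = M a * wordProd M w := List.prod_cons

lemma wordProd_append (M : Γ → Matrix S S ℝ) (u v : List Γ) :
    wordProd M (u ++ v) = wordProd M u * wordProd M v := by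
  simp [wordProd]

lemma semiconjBy_wordProd {F : Matrix S S ℝ} {D Mt : Γ → Matrix S S ℝ}
    (h : ∀ a, F * D a = Mt a * F) (w : List Γ) :
    SemiconjBy F (wordProd D w) (wordProd Mt w) := by
  induction w with
  | nil => exact SemiconjBy.one_right F
  | cons a w ih => exact SemiconjBy.mul_right (h a) ih

lemma wordProd_fromBlocks (M₁ : Γ → Matrix S S ℝ) (M₂ : Γ → Matrix T T ℝ) (w : List Γ) :
    wordProd (fun a => fromBlocks (M₁ a) 0 0 (M₂ a)) w =
      fromBlocks (wordProd M₁ w) 0 0 (wordProd M₂ w) := by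
  induction w with
  | nil => exact fromBlocks_one.symm
  | cons a w ih => simp [ih, fromBlocks_multiply]

lemma wordProd_submatrix_equiv (M : Γ → Matrix S S ℝ) (e : S ≃ T) (w : List Γ) :
    wordProd (fun a => (M a).submatrix e.symm e.symm) w =
      (wordProd M w).submatrix e.symm e.symm := by
  induction w with
  | nil => exact (submatrix_one_equiv e.symm).symm
  | cons a w ih => rw [wordProd_cons, wordProd_cons, ih, submatrix_mul_equiv]

lemma WAlang_fromBlocks (M₁ : Γ → Matrix S S ℝ) (α₁ η₁ : S → ℝ)
    (M₂ : Γ → Matrix T T ℝ) (α₂ η₂ : T → ℝ) (w : List Γ) :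
    WAlang (fun a => fromBlocks (M₁ a) 0 0 (M₂ a)) (Sum.elim α₁ α₂) (Sum.elim η₁ η₂) w =
      WAlang M₁ α₁ η₁ w + WAlang M₂ α₂ η₂ w := by
  simp [WAlang, wordProd_fromBlocks, fromBlocks_mulVec, sumElim_dotProduct_sumElim]

lemma WAlang_submatrix_equiv (M : Γ → Matrix S S ℝ) (α η : T → ℝ) (e : S ≃ T) (w : List Γ) :
    WAlang (fun a => (M a).submatrix e.symm e.symm) α η w = WAlang M (α ∘ e) (η ∘ e) w := by
  rw [WAlang, WAlang, wordProd_submatrix_equiv, submatrix_mulVec_equiv, Equiv.symm_symm,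
    dotProduct_comp_equiv_symm]

lemma WAlang_neg_final (M : Γ → Matrix S S ℝ) (α η : S → ℝ) (w : List Γ) :
    WAlang M α (-η) w = -WAlang M α η w := by
  rw [WAlang, WAlang, mulVec_neg, dotProduct_neg]

end WordProd

lemma WAlang_fromBlocks_append_eq_sub {Γ : Type*} {n₁ n₂ : ℕ}
    (M₁ : Γ → Matrix (Fin n₁) (Fin n₁) ℝ) (α₁ η₁ : Fin n₁ → ℝ)
    (M₂ : Γ → Matrix (Fin n₂) (Fin n₂) ℝ) (α₂ η₂ : Fin n₂ → ℝ) (w : List Γ) :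
    WAlang (fun a => (fromBlocks (M₁ a) 0 0 (M₂ a)).submatrix finSumFinEquiv.symm
        finSumFinEquiv.symm) (Fin.append α₁ α₂) (Fin.append η₁ (-η₂)) w =
      WAlang M₁ α₁ η₁ w - WAlang M₂ α₂ η₂ w := by
  rw [WAlang_submatrix_equiv, Fin.append_comp_finSumFinEquiv, Fin.append_comp_finSumFinEquiv,
    WAlang_fromBlocks, WAlang_neg_final, sub_eq_add_neg]

section Reachable

variable {ι Γ : Type*} [Fintype ι] [DecidableEq ι]

def reachableSpan (D : Γ → Matrix ι ι ℝ) (x₀ : ι → ℝ) : Submodule ℝ (ι → ℝ) :=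
  Submodule.span ℝ (Set.range fun w => x₀ ᵥ* wordProd D w)

lemma vecMul_mem_reachableSpan {D : Γ → Matrix ι ι ℝ} {x₀ v : ι → ℝ}
    (hv : v ∈ reachableSpan D x₀) (a : Γ) : v ᵥ* D a ∈ reachableSpan D x₀ := by
  induction hv using Submodule.span_induction with
  | mem _ hx =>
    obtain ⟨w, rfl⟩ := hx
    refine Submodule.subset_span ⟨w ++ [a], ?_⟩
    simp [wordProd_append, vecMul_vecMul]
  | zero => simp
  | add x y _ _ hx hy => simpa [add_vecMul] using add_mem hx hy
  | smul c x _ hx => simpa [smul_vecMul] using Submodule.smul_mem _ c hx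

lemma dotProduct_eq_zero_of_mem_reachableSpan {D : Γ → Matrix ι ι ℝ} {x₀ η v : ι → ℝ}
    (h : ∀ w, WAlang D x₀ η w = 0) (hv : v ∈ reachableSpan D x₀) : v ⬝ᵥ η = 0 := by
  induction hv using Submodule.span_induction with
  | mem _ hx =>
    obtain ⟨w, rfl⟩ := hx
    rw [← dotProduct_mulVec]
    exact h w
  | zero => simp
  | add x y _ _ hx hy => simp [add_dotProduct, hx, hy]
  | smul c x _ hx => simp [smul_dotProduct, hx]

theorem exists_intertwining_of_forall_WAlang_eq_zero {D : Γ → Matrix ι ι ℝ} {x₀ η : ι → ℝ}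
    (h : ∀ w, WAlang D x₀ η w = 0) (i₀ : ι) :
    ∃ (Mt : Γ → Matrix ι ι ℝ) (F : Matrix ι ι ℝ),
      F i₀ = x₀ ∧ F *ᵥ η = 0 ∧ ∀ a, F * D a = Mt a * F := by
  rcases eq_or_ne x₀ 0 with rfl | hx₀
  · exact ⟨0, 0, rfl, zero_mulVec η, fun a => by simp⟩
  obtain ⟨F, hFi₀, hF⟩ := exists_row_eq_and_span_range_eq
    (s := Set.range fun w => x₀ ᵥ* wordProd D w) ⟨[], by simp⟩ hx₀ i₀
  replace hF : Submodule.span ℝ (Set.range F) = reachableSpan D x₀ := hF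
  have hrow : ∀ i, F i ∈ reachableSpan D x₀ := fun i => hF ▸ Submodule.subset_span ⟨i, rfl⟩
  choose Mt hMt using fun a =>
    exists_mul_eq_mul_of_vecMul_mem_span fun i => hF ▸ vecMul_mem_reachableSpan (hrow i) a
  exact ⟨Mt, F, hFi₀,
    funext fun i => dotProduct_eq_zero_of_mem_reachableSpan h (hrow i), hMt⟩

theorem WAlang_eq_zero_of_mul_eq_mul {D Mt : Γ → Matrix ι ι ℝ} {F : Matrix ι ι ℝ} {η : ι → ℝ}
    (i₀ : ι) (hη : F *ᵥ η = 0) (hF : ∀ a, F * D a = Mt a * F) (w : List Γ) :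
    WAlang D (F i₀) η w = 0 :=
  calc WAlang D (F i₀) η w = ((F * wordProd D w) *ᵥ η) i₀ := by
        rw [WAlang, dotProduct_mulVec, ← mul_apply_eq_vecMul]; rfl
    _ = (wordProd Mt w *ᵥ (F *ᵥ η)) i₀ := by rw [(semiconjBy_wordProd hF w).eq, mulVec_mulVec]
    _ = 0 := by simp [hη]

theorem forall_WAlang_eq_zero_iff (D : Γ → Matrix ι ι ℝ) (x₀ η : ι → ℝ) (i₀ : ι) :
    (∀ w, WAlang D x₀ η w = 0) ↔ ∃ (Mt : Γ → Matrix ι ι ℝ) (F : Matrix ι ι ℝ),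
      F i₀ = x₀ ∧ F *ᵥ η = 0 ∧ ∀ a, F * D a = Mt a * F := by
  refine ⟨fun h => exists_intertwining_of_forall_WAlang_eq_zero h i₀, ?_⟩
  rintro ⟨Mt, F, rfl, hη, hF⟩
  exact WAlang_eq_zero_of_mul_eq_mul i₀ hη hF

end Reachable

theorem PA_equivalence_iff_exists_F_general {Γ : Type*} {n₁ n₂ : ℕ}
    (M₁ : Γ → Matrix (Fin n₁) (Fin n₁) ℝ) (α₁ η₁ : Fin n₁ → ℝ)
    (M₂ : Γ → Matrix (Fin n₂) (Fin n₂) ℝ) (α₂ η₂ : Fin n₂ → ℝ) :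
    (∀ w : List Γ, WAlang M₂ α₂ η₂ w = WAlang M₁ α₁ η₁ w) ↔
    (∃ (Mt : Γ → Matrix (Fin (n₁ + n₂)) (Fin (n₁ + n₂)) ℝ)
       (F : Matrix (Fin (n₁ + n₂)) (Fin (n₁ + n₂)) ℝ),
      (∀ i : Fin (n₁ + n₂), (i : ℕ) = 0 → F i = Fin.append α₁ α₂) ∧
      F.mulVec (Fin.append η₁ (fun i => -η₂ i)) = 0 ∧
      (∀ a, F * ((Matrix.fromBlocks (M₁ a) 0 0 (M₂ a)).submatrix
          finSumFinEquiv.symm finSumFinEquiv.symm) = Mt a * F)) := by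
  rcases Nat.eq_zero_or_pos (n₁ + n₂) with hN | hN
  · obtain ⟨rfl, rfl⟩ := Nat.add_eq_zero_iff.1 hN
    simp [WAlang, eq_iff_true_of_subsingleton]
  set i₀ : Fin (n₁ + n₂) := ⟨0, hN⟩
  have hfirst : ∀ F : Matrix (Fin (n₁ + n₂)) (Fin (n₁ + n₂)) ℝ,
      (∀ i : Fin (n₁ + n₂), (i : ℕ) = 0 → F i = Fin.append α₁ α₂) ↔ F i₀ = Fin.append α₁ α₂ :=
    fun F => ⟨fun h => h i₀ rfl, fun h i hi => (Fin.ext hi : i = i₀) ▸ h⟩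
  simp_rw [hfirst, eq_comm (a := WAlang M₂ α₂ η₂ _), ← sub_eq_zero (a := WAlang M₁ α₁ η₁ _),
    ← WAlang_fromBlocks_append_eq_sub]
  exact forall_WAlang_eq_zero_iff _ _ _ i₀

/-- two PAs `A₁, A₂` are equivalent iff there are matrices
`M̃(a), F ∈ ℝ^{(n₁+n₂)×(n₁+n₂)}` such that the first row of `F` is `(α₁, α₂)`,
`F (η₁ᵀ, −η₂ᵀ)ᵀ = 0`, and `F · diag(M₁(a), M₂(a)) = M̃(a) · F` for all `a`. -/
theorem PA_equivalence_iff_exists_F {Γ : Type*} {n₁ n₂ : ℕ}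
    (M₁ : Γ → Matrix (Fin n₁) (Fin n₁) ℝ) (α₁ η₁ : Fin n₁ → ℝ)
    (M₂ : Γ → Matrix (Fin n₂) (Fin n₂) ℝ) (α₂ η₂ : Fin n₂ → ℝ)
    -- `A₁` is a PA:
    (hα₁ : ∀ i, 0 ≤ α₁ i) (hα₁s : ∑ i, α₁ i ≤ 1)
    (hM₁ : ∀ a i j, 0 ≤ M₁ a i j) (hM₁s : ∀ a i, ∑ j, M₁ a i j ≤ 1)
    (hη₁ : ∀ i, η₁ i ∈ Set.Icc (0 : ℝ) 1)
    -- `A₂` is a PA: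
    (hα₂ : ∀ i, 0 ≤ α₂ i) (hα₂s : ∑ i, α₂ i ≤ 1)
    (hM₂ : ∀ a i j, 0 ≤ M₂ a i j) (hM₂s : ∀ a i, ∑ j, M₂ a i j ≤ 1)
    (hη₂ : ∀ i, η₂ i ∈ Set.Icc (0 : ℝ) 1) :
    (∀ w : List Γ, WAlang M₂ α₂ η₂ w = WAlang M₁ α₁ η₁ w) ↔
    (∃ (Mt : Γ → Matrix (Fin (n₁ + n₂)) (Fin (n₁ + n₂)) ℝ)
       (F : Matrix (Fin (n₁ + n₂)) (Fin (n₁ + n₂)) ℝ),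
      (∀ i : Fin (n₁ + n₂), (i : ℕ) = 0 → F i = Fin.append α₁ α₂) ∧
      F.mulVec (Fin.append η₁ (fun i => -η₂ i)) = 0 ∧
      (∀ a, F * ((Matrix.fromBlocks (M₁ a) 0 0 (M₂ a)).submatrix
          finSumFinEquiv.symm finSumFinEquiv.symm) = Mt a * F)) :=
  PA_equivalence_iff_exists_F_general M₁ α₁ η₁ M₂ α₂ η₂
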